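/- For positive reals v_1, …, v_k with maximum v_max, one has ∑_{i=1}^k 1/(1/v_i + 1/v_max) ≤ (1 - 1/(√k + 1)) · ∑_{i=1}^k v_i. -/
import Mathlib

theorem efficiency_upper_bound (k : ℕ) (hk : 1 ≤ k) (v : Fin k → ℝ)
    (hv : ∀ i, 0 < v i) (vmax : ℝ) (hle : ∀ i, v i ≤ vmax) (hmem : ∃ i, v i = vmax) :
    ∑ i, 1 / (1 / v i + 1 / vmax) ≤ (1 - 1 / (Real.sqrt k + 1)) * ∑ i, v i := by
  obtain ⟨i0, hi0⟩ := hmem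
  have hM : 0 < vmax := hi0 ▸ hv i0
  set s := Real.sqrt (k : ℝ) with hs
  have hs1 : 1 ≤ s := by
    rw [hs, show (1:ℝ) = Real.sqrt 1 by simp]
    exact Real.sqrt_le_sqrt (by exact_mod_cast hk)
  have hssq : s ^ 2 = (k : ℝ) := Real.sq_sqrt (by positivity)
  have hterm : ∀ i, 1 / (1 / v i + 1 / vmax) = v i - (v i) ^ 2 / (v i + vmax) := by
    intro i
    have h1 := hv i
    have h2 : 0 < v i + vmax := by linarith
    field_simp
    ring
  rw [Finset.sum_congr rfl fun i _ => hterm i, Finset.sum_sub_distrib]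
  have key : (∑ i, v i) / (s + 1) ≤ ∑ i, (v i) ^ 2 / (v i + vmax) := by
    have hsplitD :
        ∑ i ∈ Finset.univ.erase i0, (v i) ^ 2 / (v i + vmax) + (v i0) ^ 2 / (v i0 + vmax)
          = ∑ i, (v i) ^ 2 / (v i + vmax) :=
      Finset.sum_erase_add _ _ (Finset.mem_univ i0)
    have hsplitS : ∑ i ∈ Finset.univ.erase i0, v i + v i0 = ∑ i, v i :=
      Finset.sum_erase_add _ _ (Finset.mem_univ i0)
    set T := ∑ i ∈ Finset.univ.erase i0, v i with hT
    have hT0 : 0 ≤ T := Finset.sum_nonneg fun i _ => (hv i).le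
    have hi0term : (v i0) ^ 2 / (v i0 + vmax) = vmax / 2 := by
      rw [hi0]; field_simp; ring
    have hcard : ((Finset.univ.erase i0).card : ℝ) = (k : ℝ) - 1 := by
      rw [Finset.card_erase_of_mem (Finset.mem_univ i0)]
      simp
      rw [Nat.cast_sub hk]
      simp
    have hcauchy : T ^ 2 ≤ ((k : ℝ) - 1) * ∑ i ∈ Finset.univ.erase i0, (v i) ^ 2 := by
      rw [← hcard]
      exact sq_sum_le_card_mul_sum_sq
    have hrest : ∑ i ∈ Finset.univ.erase i0, (v i) ^ 2 / (2 * vmax)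
        ≤ ∑ i ∈ Finset.univ.erase i0, (v i) ^ 2 / (v i + vmax) := by
      apply Finset.sum_le_sum
      intro i _
      apply div_le_div_of_nonneg_left (by positivity) (by have := hv i; linarith) (by linarith [hle i])
    rw [← Finset.sum_div] at hrest
    -- scalar inequality
    rcases eq_or_lt_of_le hk with h1 | h2
    ·
      -- k = 1 means univ = {i0}, so T = 0
      have hk1 : k = 1 := h1.symm
      subst hk1
      have huniv : (Finset.univ : Finset (Fin 1)) = {i0} := by
        apply Finset.eq_singleton_iff_unique_mem.2
        exact ⟨Finset.mem_univ _, fun x _ => Subsingleton.elim x i0⟩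
      have hs' : s = 1 := by rw [hs]; norm_num
      rw [huniv]
      simp [hi0term, hi0, hs']
      rw [div_le_div_iff₀ (by norm_num) (by linarith)]
      nlinarith
    · have hk2 : (2 : ℝ) ≤ (k : ℝ) := by exact_mod_cast h2
      have hks : 1 < s := by nlinarith [hs1]
      have hkm : (0:ℝ) < (k:ℝ) - 1 := by linarith
      have hden : 0 < ((k:ℝ) - 1) * (2 * vmax) := mul_pos hkm (by linarith)
      have hscalar : (T + vmax) / (s + 1) ≤ vmax / 2 + T ^ 2 / (((k:ℝ) - 1) * (2 * vmax)) := by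
        rw [div_le_iff₀ (by linarith), ← sub_nonneg]
        have expand : (vmax / 2 + T ^ 2 / (((k:ℝ)-1) * (2 * vmax))) * (s + 1) - (T + vmax)
            = ((s+1) * (((k:ℝ)-1) * vmax^2 + T^2) - 2 * ((k:ℝ)-1) * vmax * (T + vmax))
              / (((k:ℝ)-1) * (2*vmax)) := by
          field_simp
        rw [expand]
        apply div_nonneg _ hden.le
        have hnum : (s+1) * (((k:ℝ)-1) * vmax^2 + T^2) - 2 * ((k:ℝ)-1) * vmax * (T + vmax)
            = (s+1) * (T - (s-1)*vmax)^2 := by rw [← hssq]; ring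
        rw [hnum]
        positivity
      have hsum2 : T^2 / (((k:ℝ)-1) * (2*vmax)) ≤ (∑ i ∈ Finset.univ.erase i0, (v i) ^ 2) / (2*vmax) := by
        rw [div_le_div_iff₀ hden (by linarith)]
        nlinarith [hcauchy, hM]
      calc (∑ i, v i) / (s + 1) = (T + vmax) / (s + 1) := by
            rw [← hsplitS, hi0]
          _ ≤ vmax / 2 + T ^ 2 / (((k:ℝ)-1) * (2*vmax)) := hscalar
          _ ≤ vmax / 2 + (∑ i ∈ Finset.univ.erase i0, (v i) ^ 2) / (2*vmax) := by linarith
          _ ≤ (v i0) ^ 2 / (v i0 + vmax) + ∑ i ∈ Finset.univ.erase i0, (v i) ^ 2 / (v i + vmax) := by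
            rw [hi0term]; linarith [hrest]
          _ = ∑ i, (v i) ^ 2 / (v i + vmax) := by rw [← hsplitD]; ring
  have hfinal : (1 - 1 / (s + 1)) * ∑ i, v i = ∑ i, v i - (∑ i, v i) * (1 / (s + 1)) := by ring
  rw [hfinal]
  have hpos : 0 < s + 1 := by linarith
  have : (∑ i, v i) * (1 / (s+1)) = (∑ i, v i) / (s+1) := by ring
  rw [this]
  linarith [key]
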